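/- arXiv:1811.00582 — 4 statements merged into one kernel-verified Lean document; each statement's English description precedes it below -/
import Mathlib

section
/- Let 1<α<2 and α−1<β<1, and let f:(0,1)→ℝ be measurable with ‖f‖_{ω^{(β,α−β)}} < ∞. Then ∫₀¹ ω^{(β−1,α−β−1)}(x)·(∫₀^x f(s)ds)² dx ≤ B(α−β,β)·B(1−(α−β),1−β)·‖f‖²_{ω^{(β,α−β)}}, where B(a,b) := Γ(a)Γ(b)/Γ(a+b) is the Beta function. -/
open MeasureTheory Real Filter

/-- The weight function ω^{(a,b)}(x) = (1-x)^a x^b. -/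
noncomputable def jw (a b x : ℝ) : ℝ := (1 - x) ^ a * x ^ b

/-- The weighted L² norm ‖g‖_{ω^{(a,b)}}. -/
noncomputable def jwNorm (a b : ℝ) (g : ℝ → ℝ) : ℝ :=
  Real.sqrt (∫ x in (0:ℝ)..1, jw a b x * g x ^ 2)

/-- The Beta function B(a,b) = Γ(a)Γ(b)/Γ(a+b). -/
noncomputable def Betaf (a b : ℝ) : ℝ :=
  Real.Gamma a * Real.Gamma b / Real.Gamma (a + b)

/-- Generalized binomial coefficient binom(x,k) = Γ(x+1)/(Γ(k+1)Γ(x-k+1)). -/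
noncomputable def rbinom (x : ℝ) (k : ℕ) : ℝ :=
  Real.Gamma (x + 1) / (Real.Gamma ((k : ℝ) + 1) * Real.Gamma (x - (k : ℝ) + 1))

/-- Jacobi polynomial on [0,1]: G_n^{(a,b)}(t). -/
noncomputable def JacobiG (n : ℕ) (a b : ℝ) (t : ℝ) : ℝ :=
  ∑ m ∈ Finset.range (n + 1),
    (2 : ℝ) ^ (-(n : ℝ)) * rbinom ((n : ℝ) + a) m * rbinom ((n : ℝ) + b) (n - m) *
      (2 * t - 2) ^ (n - m) * (2 * t) ^ m

/-- The weighted norm value |‖G_n^{(a,b)}‖|. -/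
noncomputable def GNormVal (n : ℕ) (a b : ℝ) : ℝ :=
  Real.sqrt (Real.Gamma ((n : ℝ) + a + 1) * Real.Gamma ((n : ℝ) + b + 1) /
    ((2 * (n : ℝ) + a + b + 1) * Real.Gamma ((n : ℝ) + 1) * Real.Gamma ((n : ℝ) + a + b + 1)))

/-- Jacobi coefficient of g with respect to G_j^{(a,b)} in L²_{ω^{(a,b)}}. -/
noncomputable def jcoeff (a b : ℝ) (g : ℝ → ℝ) (j : ℕ) : ℝ :=
  (∫ x in (0:ℝ)..1, jw a b x * g x * JacobiG j a b x) / GNormVal j a b ^ 2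

/-- Left Riemann-Liouville fractional integral (₀I_x^σ g)(x). -/
noncomputable def leftI (σ : ℝ) (g : ℝ → ℝ) (x : ℝ) : ℝ :=
  (1 / Real.Gamma σ) * ∫ s in (0:ℝ)..x, g s * (x - s) ^ (σ - 1)

/-- Right Riemann-Liouville fractional integral (ₓI₁^σ g)(x). -/
noncomputable def rightI (σ : ℝ) (g : ℝ → ℝ) (x : ℝ) : ℝ :=
  (1 / Real.Gamma σ) * ∫ s in x..(1:ℝ), g s * (s - x) ^ (σ - 1)

/-- The eigenvalues λ_n = (sin(πα)/(sin(π(α-β)) + sin(πβ)))·Γ(n+α)/n!. -/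
noncomputable def lamCoef (α β : ℝ) (n : ℕ) : ℝ :=
  (Real.sin (π * α) / (Real.sin (π * (α - β)) + Real.sin (π * β))) *
    Real.Gamma ((n : ℝ) + α) / (Nat.factorial n : ℝ)

/-- f₁(x) = (1/K(x))·∫₀ˣ f(y) dy. -/
noncomputable def fOne (K f : ℝ → ℝ) (x : ℝ) : ℝ := (1 / K x) * ∫ y in (0:ℝ)..x, f y

/-- f₂(x) = 1/K(x). -/
noncomputable def fTwo (K : ℝ → ℝ) (x : ℝ) : ℝ := 1 / K x

/-- The Jacobi coefficients f_{k,j} of f₁ (k = 1) and f₂ (k = 2) w.r.t. G_j^{(β-1,α-β-1)}. -/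
noncomputable def fCoef (α β : ℝ) (K f : ℝ → ℝ) (k : ℕ) (j : ℕ) : ℝ :=
  jcoeff (β - 1) (α - β - 1) (if k = 1 then fOne K f else fTwo K) j

/-- The constant A = f_{1,0}/f_{2,0}. -/
noncomputable def Aconst (α β : ℝ) (K f : ℝ → ℝ) : ℝ :=
  fCoef α β K f 1 0 / fCoef α β K f 2 0

/-- The solution coefficients c_j = (−f_{1,j+1} + A·f_{2,j+1})/λ_j. -/
noncomputable def cCoef (α β : ℝ) (K f : ℝ → ℝ) (j : ℕ) : ℝ :=
  (-(fCoef α β K f 1 (j + 1)) + Aconst α β K f * fCoef α β K f 2 (j + 1)) / lamCoef α β j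

/-! Cauchy–Schwarz against the weight `ω^{(β,α-β)}` gives, uniformly in `x ∈ [0,1]`,
`(∫₀ˣ f)² ≤ ‖f‖² ∫₀¹ ω^{(-β,β-α)} = ‖f‖² B(1-(α-β), 1-β)`; integrating this bound
against `ω^{(β-1,α-β-1)}`, whose total mass is `B(α-β, β)`, gives the claim. -/

open Set

theorem jw_pos (a b : ℝ) {x : ℝ} (hx : x ∈ Ioo 0 1) : 0 < jw a b x :=
  mul_pos (rpow_pos_of_pos (sub_pos.mpr hx.2) a) (rpow_pos_of_pos hx.1 b)

theorem jw_nonneg (a b : ℝ) {x : ℝ} (hx : x ∈ Icc 0 1) : 0 ≤ jw a b x :=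
  mul_nonneg (rpow_nonneg (sub_nonneg.mpr hx.2) a) (rpow_nonneg hx.1 b)

theorem inv_jw (a b : ℝ) {x : ℝ} (hx : x ∈ Icc 0 1) : (jw a b x)⁻¹ = jw (-a) (-b) x := by
  rw [jw, jw, mul_inv, rpow_neg (sub_nonneg.mpr hx.2), rpow_neg hx.1]

theorem ofReal_jw (a b : ℝ) {x : ℝ} (hx : x ∈ Icc 0 1) :
    ((jw a b x : ℝ) : ℂ) =
      (x : ℂ) ^ ((b + 1 : ℂ) - 1) * (1 - (x : ℂ)) ^ ((a + 1 : ℂ) - 1) := by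
  rw [jw, Complex.ofReal_mul, Complex.ofReal_cpow (sub_nonneg.mpr hx.2),
    Complex.ofReal_cpow hx.1, add_sub_cancel_right, add_sub_cancel_right, mul_comm,
    Complex.ofReal_sub, Complex.ofReal_one]

theorem intervalIntegrable_jw {a b : ℝ} (ha : -1 < a) (hb : -1 < b) :
    IntervalIntegrable (jw a b) volume 0 1 := by
  have hconv := Complex.betaIntegral_convergent (u := b + 1) (v := a + 1)
    (by simp; linarith) (by simp; linarith)
  refine (intervalIntegrable_iff_integrableOn_Ioc_of_le zero_le_one).mpr ?_
  refine IntegrableOn.congr_fun hconv.1.re (fun x hx => ?_) measurableSet_Ioc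
  rw [← ofReal_jw a b (Ioc_subset_Icc_self hx), RCLike.re_to_complex, Complex.ofReal_re]

theorem integral_jw {a b : ℝ} (ha : -1 < a) (hb : -1 < b) :
    ∫ x in (0:ℝ)..1, jw a b x = Betaf (b + 1) (a + 1) := by
  have hGamma := Complex.Gamma_mul_Gamma_eq_betaIntegral (s := b + 1) (t := a + 1)
    (by simp; linarith) (by simp; linarith)
  have hbeta :
      Complex.betaIntegral (b + 1) (a + 1) = ((∫ x in (0:ℝ)..1, jw a b x : ℝ) : ℂ) := by
    rw [Complex.betaIntegral, ← intervalIntegral.integral_ofReal]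
    refine intervalIntegral.integral_congr fun x hx => ?_
    rw [uIcc_of_le zero_le_one] at hx
    exact (ofReal_jw a b hx).symm
  have hpos : 0 < Real.Gamma (b + 1 + (a + 1)) := Real.Gamma_pos_of_pos (by linarith)
  rw [Betaf, eq_div_iff hpos.ne', ← Complex.ofReal_inj]
  simp only [Complex.ofReal_mul, ← Complex.Gamma_ofReal, Complex.ofReal_add, Complex.ofReal_one,
    hGamma, hbeta]
  ring

theorem sq_integral_le_integral_mul_sq_mul_integral_inv {α : Type*} [MeasurableSpace α]
    {μ : Measure α} {w f : α → ℝ} (hw : ∀ᵐ x ∂μ, 0 < w x)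
    (hwf : Integrable (fun x => w x * f x ^ 2) μ) (hw_inv : Integrable (fun x => (w x)⁻¹) μ) :
    (∫ x, f x ∂μ) ^ 2 ≤ (∫ x, w x * f x ^ 2 ∂μ) * ∫ x, (w x)⁻¹ ∂μ := by
  have hA : 0 ≤ ∫ x, w x * f x ^ 2 ∂μ :=
    integral_nonneg_of_ae (hw.mono fun x hx => by positivity)
  have hB : 0 ≤ ∫ x, (w x)⁻¹ ∂μ := integral_nonneg_of_ae (hw.mono fun x hx => by positivity)
  by_cases hf : Integrable f μ
  swap
  · rw [integral_undef hf, zero_pow two_ne_zero]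
    exact mul_nonneg hA hB
  -- integrating `w f² t² - 2 t f + w⁻¹ = (w t f - 1)² / w ≥ 0` gives a nonnegative quadratic in `t`
  have hquad : ∀ t : ℝ,
      0 ≤ (∫ x, w x * f x ^ 2 ∂μ) * (t * t) + (-2 * ∫ x, f x ∂μ) * t + ∫ x, (w x)⁻¹ ∂μ := by
    intro t
    have hint : ∫ x, (w x * f x ^ 2 * (t * t) + -2 * t * f x + (w x)⁻¹) ∂μ =
        (∫ x, w x * f x ^ 2 ∂μ) * (t * t) + (-2 * ∫ x, f x ∂μ) * t + ∫ x, (w x)⁻¹ ∂μ := by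
      rw [integral_add _ hw_inv, integral_add (hwf.mul_const _) (hf.const_mul _),
        integral_mul_const, integral_const_mul]
      · ring
      · exact (hwf.mul_const _).add (hf.const_mul _)
    rw [← hint]
    refine integral_nonneg_of_ae (hw.mono fun x hx => ?_)
    calc (0 : ℝ) ≤ (w x * t * f x - 1) ^ 2 / w x := by positivity
      _ = _ := by field_simp; ring
  have hdiscrim := discrim_le_zero hquad
  rw [discrim] at hdiscrim
  nlinarith

theorem sq_integral_le_integral_jw_mul_sq_mul_Betaf {a b : ℝ} (ha : a < 1) (hb : b < 1)
    {f : ℝ → ℝ} (hf : IntervalIntegrable (fun s => jw a b s * f s ^ 2) volume 0 1)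
    {x : ℝ} (hx0 : 0 ≤ x) (hx1 : x ≤ 1) :
    (∫ s in (0:ℝ)..x, f s) ^ 2 ≤
      (∫ s in (0:ℝ)..1, jw a b s * f s ^ 2) * Betaf (1 - b) (1 - a) := by
  have hsub : Ioo 0 x ⊆ Ioc 0 1 := fun s hs => ⟨hs.1, hs.2.le.trans hx1⟩
  have hIoo : ∀ s ∈ Ioo 0 x, s ∈ Icc (0:ℝ) 1 := fun s hs => Ioc_subset_Icc_self (hsub hs)
  have hdual : IntegrableOn (jw (-a) (-b)) (Ioc 0 1) :=
    (intervalIntegrable_jw (by linarith) (by linarith)).1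
  have hdual_eq : ∀ s ∈ Ioo 0 x, (jw a b s)⁻¹ = jw (-a) (-b) s :=
    fun s hs => inv_jw a b (hIoo s hs)
  have hmass : ∫ s in Ioo 0 x, jw a b s * f s ^ 2 ≤ ∫ s in (0:ℝ)..1, jw a b s * f s ^ 2 := by
    rw [intervalIntegral.integral_of_le zero_le_one]
    refine setIntegral_mono_set hf.1 ?_ hsub.eventuallyLE
    exact ae_restrict_of_forall_mem measurableSet_Ioc fun s hs =>
      mul_nonneg (jw_nonneg a b (Ioc_subset_Icc_self hs)) (sq_nonneg _)
  have hdual_le : ∫ s in Ioo 0 x, (jw a b s)⁻¹ ≤ Betaf (1 - b) (1 - a) := by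
    rw [setIntegral_congr_fun measurableSet_Ioo hdual_eq, ← neg_add_eq_sub, ← neg_add_eq_sub,
      ← integral_jw (by linarith) (by linarith), intervalIntegral.integral_of_le zero_le_one]
    exact setIntegral_mono_set hdual (ae_restrict_of_forall_mem measurableSet_Ioc fun s hs =>
      jw_nonneg _ _ (Ioc_subset_Icc_self hs)) hsub.eventuallyLE
  rw [intervalIntegral.integral_of_le hx0, integral_Ioc_eq_integral_Ioo]
  calc (∫ s in Ioo 0 x, f s) ^ 2
      ≤ (∫ s in Ioo 0 x, jw a b s * f s ^ 2) * ∫ s in Ioo 0 x, (jw a b s)⁻¹ :=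
        sq_integral_le_integral_mul_sq_mul_integral_inv
          (ae_restrict_of_forall_mem measurableSet_Ioo fun s hs =>
            jw_pos a b ⟨hs.1, hs.2.trans_le hx1⟩)
          (hf.1.mono_set hsub)
          ((hdual.mono_set hsub).congr_fun (fun s hs => (hdual_eq s hs).symm) measurableSet_Ioo)
    _ ≤ _ := by
        refine mul_le_mul hmass hdual_le ?_ ?_
        · exact setIntegral_nonneg measurableSet_Ioo fun s hs =>
            inv_nonneg.mpr (jw_nonneg a b (hIoo s hs))
        · exact intervalIntegral.integral_nonneg zero_le_one fun s hs =>
            mul_nonneg (jw_nonneg a b hs) (sq_nonneg _)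

theorem stmt1_general (α β : ℝ) (hα : 1 < α ∧ α < 2) (hβ : α - 1 < β ∧ β < 1)
    (f : ℝ → ℝ)
    (hfin : IntervalIntegrable (fun x => jw β (α - β) x * f x ^ 2) MeasureTheory.volume 0 1) :
    (∫ x in (0:ℝ)..1, jw (β - 1) (α - β - 1) x * (∫ s in (0:ℝ)..x, f s) ^ 2) ≤
      Betaf (α - β) β * Betaf (1 - (α - β)) (1 - β) * jwNorm β (α - β) f ^ 2 := by
  obtain ⟨hα1, -⟩ := hα
  obtain ⟨hβ1, hβ2⟩ := hβ
  set I := ∫ x in (0:ℝ)..1, jw β (α - β) x * f x ^ 2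
  have hnorm : jwNorm β (α - β) f ^ 2 = I :=
    sq_sqrt (intervalIntegral.integral_nonneg zero_le_one fun x hx =>
      mul_nonneg (jw_nonneg _ _ hx) (sq_nonneg _))
  have hweight := intervalIntegrable_jw (a := β - 1) (b := α - β - 1) (by linarith) (by linarith)
  calc (∫ x in (0:ℝ)..1, jw (β - 1) (α - β - 1) x * (∫ s in (0:ℝ)..x, f s) ^ 2)
      ≤ ∫ x in (0:ℝ)..1, jw (β - 1) (α - β - 1) x * (I * Betaf (1 - (α - β)) (1 - β)) := by
        simp only [intervalIntegral.integral_of_le zero_le_one]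
        refine integral_mono_of_nonneg ?_ (hweight.1.mul_const _) ?_
        · exact ae_restrict_of_forall_mem measurableSet_Ioc fun x hx =>
            mul_nonneg (jw_nonneg _ _ (Ioc_subset_Icc_self hx)) (sq_nonneg _)
        · exact ae_restrict_of_forall_mem measurableSet_Ioc fun x hx =>
            mul_le_mul_of_nonneg_left
              (sq_integral_le_integral_jw_mul_sq_mul_Betaf hβ2 (by linarith) hfin hx.1.le hx.2)
              (jw_nonneg _ _ (Ioc_subset_Icc_self hx))
    _ = _ := by
        rw [intervalIntegral.integral_mul_const, integral_jw (by linarith) (by linarith), hnorm,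
          sub_add_cancel, sub_add_cancel]
        ring

/-- weighted bound for the antiderivative of f. -/
theorem stmt1 (α β : ℝ) (hα : 1 < α ∧ α < 2) (hβ : α - 1 < β ∧ β < 1)
    (f : ℝ → ℝ) (hf : Measurable f)
    (hfin : IntervalIntegrable (fun x => jw β (α - β) x * f x ^ 2) MeasureTheory.volume 0 1) :
    (∫ x in (0:ℝ)..1, jw (β - 1) (α - β - 1) x * (∫ s in (0:ℝ)..x, f s) ^ 2) ≤
      Betaf (α - β) β * Betaf (1 - (α - β)) (1 - β) * jwNorm β (α - β) f ^ 2 :=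
  stmt1_general α β hα hβ f hfin
end

section
/- Let 1<α<2 and α−1≤β≤1. Then for every j ∈ ℕ, |‖G_j^{(α−β,β)}‖|² / |‖G_{j+1}^{(β−1,α−β−1)}‖|² = (j+1)/(j+α), and consequently 1/2 ≤ |‖G_j^{(α−β,β)}‖|² / |‖G_{j+1}^{(β−1,α−β−1)}‖|² ≤ 1. -/
open MeasureTheory Real Filter

lemma GNormVal_sq {n : ℕ} {a b : ℝ} (ha : 0 < (n : ℝ) + a + 1) (hb : 0 < (n : ℝ) + b + 1)
    (hab : 0 < (n : ℝ) + a + b + 1) :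
    GNormVal n a b ^ 2 = Real.Gamma ((n : ℝ) + a + 1) * Real.Gamma ((n : ℝ) + b + 1) /
      ((2 * (n : ℝ) + a + b + 1) * Real.Gamma ((n : ℝ) + 1) * Real.Gamma ((n : ℝ) + a + b + 1)) := by
  have hn : (0 : ℝ) ≤ n := n.cast_nonneg
  have h2n : 0 < 2 * (n : ℝ) + a + b + 1 := by linarith
  have := Real.Gamma_pos_of_pos ha
  have := Real.Gamma_pos_of_pos hb
  have := Real.Gamma_pos_of_pos (by linarith : (0 : ℝ) < n + 1)
  have := Real.Gamma_pos_of_pos hab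
  exact Real.sq_sqrt (by positivity)

/-- The two norms share the factors `Γ(n+a+1) Γ(n+b+1) / (2n+a+b+1)`; the rest is
`Γ(x+1) = x Γ(x)` at `x = n+1` and `x = n+a+b`. -/
lemma GNormVal_sq_div_GNormVal_succ_sq {n : ℕ} {a b : ℝ} (ha : 0 < (n : ℝ) + a + 1)
    (hb : 0 < (n : ℝ) + b + 1) (hab : 0 < (n : ℝ) + a + b) :
    GNormVal n a b ^ 2 / GNormVal (n + 1) (b - 1) (a - 1) ^ 2 =
      ((n : ℝ) + 1) / ((n : ℝ) + a + b) := by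
  have hn : (0 : ℝ) ≤ n := n.cast_nonneg
  rw [GNormVal_sq ha hb (by linarith), GNormVal_sq (by push_cast; linarith)
    (by push_cast; linarith) (by push_cast; linarith)]
  push_cast
  rw [show (n : ℝ) + 1 + (b - 1) + 1 = n + b + 1 by ring,
    show (n : ℝ) + 1 + (a - 1) + 1 = n + a + 1 by ring,
    show (n : ℝ) + 1 + (b - 1) + (a - 1) + 1 = n + a + b by ring,
    show 2 * ((n : ℝ) + 1) + (b - 1) + (a - 1) + 1 = 2 * n + a + b + 1 by ring,
    Real.Gamma_add_one (by positivity : (n : ℝ) + 1 ≠ 0), Real.Gamma_add_one hab.ne']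
  have := (Real.Gamma_pos_of_pos ha).ne'
  have := (Real.Gamma_pos_of_pos hb).ne'
  have := (Real.Gamma_pos_of_pos (by linarith : (0 : ℝ) < n + 1)).ne'
  have := (Real.Gamma_pos_of_pos hab).ne'
  field_simp
  exact div_self (by linarith)

/-- ratio of squared Jacobi norm values. -/
theorem stmt4 (α β : ℝ) (hα : 1 < α ∧ α < 2) (hβ : α - 1 ≤ β ∧ β ≤ 1) (j : ℕ) :
    GNormVal j (α - β) β ^ 2 / GNormVal (j + 1) (β - 1) (α - β - 1) ^ 2 =
        ((j : ℝ) + 1) / ((j : ℝ) + α) ∧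
      1 / 2 ≤ GNormVal j (α - β) β ^ 2 / GNormVal (j + 1) (β - 1) (α - β - 1) ^ 2 ∧
      GNormVal j (α - β) β ^ 2 / GNormVal (j + 1) (β - 1) (α - β - 1) ^ 2 ≤ 1 := by
  obtain ⟨hα1, hα2⟩ := hα
  obtain ⟨hβ1, hβ2⟩ := hβ
  have hj : (0 : ℝ) ≤ j := j.cast_nonneg
  have hjα : 0 < (j : ℝ) + α := by linarith
  have ratio : GNormVal j (α - β) β ^ 2 / GNormVal (j + 1) (β - 1) (α - β - 1) ^ 2 =
      ((j : ℝ) + 1) / ((j : ℝ) + α) := by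
    rw [GNormVal_sq_div_GNormVal_succ_sq (by linarith) (by linarith) (by linarith)]
    ring_nf
  refine ⟨ratio, ?_, ?_⟩ <;> rw [ratio]
  · rw [div_le_div_iff₀ two_pos hjα]
    linarith
  · rw [div_le_one hjα]
    linarith
end

section
/- Let 1<α<2 and 0≤r≤1. Then there exists a unique β ∈ [α−1,1] such that r = sin(πβ) / ( sin(π(α−β)) + sin(πβ) ); moreover sin(π(α−β)) + sin(πβ) > 0 for every β ∈ [α−1,1]. -/
open MeasureTheory Real Filter

/-!
For `1 < α < 2` the denominator `D β = sin (π (α - β)) + sin (π β)` is positive on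
`[α - 1, 1]`, and by the addition formula the quotient `sin (π β) / D β` has derivative
`π sin (π α) / D β ^ 2 < 0` there. It falls from `1` at `β = α - 1` to `0` at `β = 1`, so it
takes every value of `[0, 1]` exactly once.
-/

open Set

noncomputable def sinRatio (α β : ℝ) : ℝ :=
  sin (π * β) / (sin (π * (α - β)) + sin (π * β))

theorem sin_sub_add_sin_pos {α β : ℝ} (h1 : 1 < α) (h2 : α < 2) (hβ : β ∈ Icc (α - 1) 1) :
    0 < sin (π * (α - β)) + sin (π * β) := by
  obtain ⟨hlo, hhi⟩ := hβ
  have hπ := pi_pos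
  have hsub : 0 ≤ sin (π * (α - β)) :=
    sin_nonneg_of_nonneg_of_le_pi (by nlinarith) (by nlinarith)
  have hsin : 0 ≤ sin (π * β) := sin_nonneg_of_nonneg_of_le_pi (by nlinarith) (by nlinarith)
  rcases hhi.lt_or_eq with hlt | rfl
  · linarith [sin_pos_of_pos_of_lt_pi (x := π * β) (by nlinarith) (by nlinarith)]
  · linarith [sin_pos_of_pos_of_lt_pi (x := π * (α - 1)) (by nlinarith) (by nlinarith)]

theorem sin_pi_mul_neg_of_one_lt_of_lt_two {α : ℝ} (h1 : 1 < α) (h2 : α < 2) : sin (π * α) < 0 := by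
  have hπ := pi_pos
  rw [← sin_sub_two_pi]
  exact sin_neg_of_neg_of_neg_pi_lt (by nlinarith) (by nlinarith)

theorem hasDerivAt_sinRatio {α x : ℝ} (hx : sin (π * (α - x)) + sin (π * x) ≠ 0) :
    HasDerivAt (sinRatio α) (π * sin (π * α) / (sin (π * (α - x)) + sin (π * x)) ^ 2) x := by
  have hnum : HasDerivAt (fun y => sin (π * y)) (cos (π * x) * π) x := by
    simpa using ((hasDerivAt_id x).const_mul π).sin
  have hsub : HasDerivAt (fun y => sin (π * (α - y))) (cos (π * (α - x)) * -π) x := by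
    simpa using (((hasDerivAt_id x).const_sub α).const_mul π).sin
  refine (hnum.div (hsub.add hnum) hx).congr_deriv ?_
  -- the numerator of the quotient rule collapses to `π sin (π (α - x) + π x)`
  rw [show π * α = π * (α - x) + π * x by ring, sin_add, Pi.add_apply]
  field_simp
  ring

theorem continuousOn_sinRatio {α : ℝ} (h1 : 1 < α) (h2 : α < 2) :
    ContinuousOn (sinRatio α) (Icc (α - 1) 1) :=
  ContinuousOn.div (by fun_prop) (by fun_prop) fun _ hβ => (sin_sub_add_sin_pos h1 h2 hβ).ne'

theorem strictAntiOn_sinRatio {α : ℝ} (h1 : 1 < α) (h2 : α < 2) :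
    StrictAntiOn (sinRatio α) (Icc (α - 1) 1) := by
  refine strictAntiOn_of_deriv_neg (convex_Icc _ _) (continuousOn_sinRatio h1 h2) fun x hx => ?_
  rw [interior_Icc] at hx
  have hD := sin_sub_add_sin_pos h1 h2 (Ioo_subset_Icc_self hx)
  rw [(hasDerivAt_sinRatio hD.ne').deriv]
  have hπα := mul_neg_of_pos_of_neg pi_pos (sin_pi_mul_neg_of_one_lt_of_lt_two h1 h2)
  exact div_neg_of_neg_of_pos hπα (by positivity)

theorem sinRatio_sub_one {α : ℝ} (h1 : 1 < α) (h2 : α < 2) : sinRatio α (α - 1) = 1 := by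
  have hpos := sin_sub_add_sin_pos h1 h2 (left_mem_Icc.2 (by linarith : α - 1 ≤ 1))
  rw [sub_sub_cancel, mul_one, sin_pi, zero_add] at hpos
  rw [sinRatio, sub_sub_cancel, mul_one, sin_pi, zero_add, div_self hpos.ne']

theorem sinRatio_one (α : ℝ) : sinRatio α 1 = 0 := by
  rw [sinRatio, mul_one, sin_pi, zero_div]

/-- existence and uniqueness of β solving r = sin(πβ)/(sin(π(α-β)) + sin(πβ)),
and positivity of the denominator. -/
theorem stmt5 (α r : ℝ) (hα : 1 < α ∧ α < 2) (hr : 0 ≤ r ∧ r ≤ 1) :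
    (∃! β : ℝ, β ∈ Set.Icc (α - 1) 1 ∧
        r = Real.sin (π * β) / (Real.sin (π * (α - β)) + Real.sin (π * β))) ∧
      ∀ β ∈ Set.Icc (α - 1) 1, 0 < Real.sin (π * (α - β)) + Real.sin (π * β) := by
  obtain ⟨h1, h2⟩ := hα
  refine ⟨?_, fun β hβ => sin_sub_add_sin_pos h1 h2 hβ⟩
  have hr' : r ∈ Icc (sinRatio α 1) (sinRatio α (α - 1)) := by
    rwa [sinRatio_one, sinRatio_sub_one h1 h2]
  obtain ⟨β, hβ, hβr⟩ := intermediate_value_Icc' (by linarith) (continuousOn_sinRatio h1 h2) hr'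
  refine ⟨β, ⟨hβ, hβr.symm⟩, fun γ ⟨hγ, hγr⟩ => ?_⟩
  exact (strictAntiOn_sinRatio h1 h2).injOn hγ hβ (hγr.symm.trans hβr.symm)
end

section
/- Let 1<α<2, α−1<β<1, set λ_j := ( sin(πα)/( sin(π(α−β)) + sin(πβ) ) )·Γ(j+α)/j!. Let K:[0,1]→ℝ be measurable with 0<K_m≤K(x)≤K_M and let f:(0,1)→ℝ be measurable with ‖f‖_{ω^{(β,α−β)}} < ∞; define f₁, f₂, the coefficients f_{k,j}, A, and c_j as in the context. Then for all M > N ≥ 0: Σ_{i=N+1}^M c_i²·|‖G_i^{(α−β,β)}‖|² ≤ (2/λ₀²)·Σ_{i=N+1}^M ( f_{1,i+1}² + A²·f_{2,i+1}² )·|‖G_{i+1}^{(β−1,α−β−1)}‖|². -/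
open MeasureTheory Real Filter

/-! The estimate holds term by term: with `λ_i = λ₀ · Γ(i+α)/(Γ(α) i!)` and
`Γ(i+α) ≥ Γ(α) i!` for `α ≥ 1`, we get `λ₀² ≤ λ_i²`; the Gamma recurrence gives
`|‖G_{i+1}^{(β-1,α-β-1)}‖|² = (i+α)/(i+1) · |‖G_i^{(α-β,β)}‖|² ≥ |‖G_i^{(α-β,β)}‖|²`;
and `(-P+Q)² ≤ 2(P²+Q²)`. -/

open scoped Nat

lemma neg_add_div_sq_le {P Q L L₀ : ℝ} (hL₀ : L₀ ≠ 0) (hL : L₀ ^ 2 ≤ L ^ 2) :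
    ((-P + Q) / L) ^ 2 ≤ 2 / L₀ ^ 2 * (P ^ 2 + Q ^ 2) := by
  have hsq : (-P + Q) ^ 2 ≤ 2 * (P ^ 2 + Q ^ 2) := by
    simpa only [neg_sq] using add_sq_le (a := -P) (b := Q)
  calc ((-P + Q) / L) ^ 2 = (-P + Q) ^ 2 / L ^ 2 := div_pow _ _ _
    _ ≤ 2 * (P ^ 2 + Q ^ 2) / L₀ ^ 2 := div_le_div₀ (by positivity) hsq (by positivity) hL
    _ = 2 / L₀ ^ 2 * (P ^ 2 + Q ^ 2) := by ring

lemma Real.Gamma_mul_factorial_le_Gamma_nat_add {α : ℝ} (hα : 1 ≤ α) (n : ℕ) :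
    Gamma α * n ! ≤ Gamma (n + α) := by
  induction n with
  | zero => simp
  | succ n ih =>
    have hΓ : Gamma (↑(n + 1) + α) = (n + α) * Gamma (n + α) := by
      rw [Nat.cast_succ, add_right_comm, Gamma_add_one (by positivity)]
    rw [hΓ, Nat.factorial_succ, Nat.cast_mul, Nat.cast_succ, mul_left_comm]
    have : 0 ≤ Gamma α * n ! := mul_nonneg (Gamma_pos_of_pos (by linarith)).le (by positivity)
    exact mul_le_mul (by linarith) ih this (by positivity)

lemma lamCoef_eq_lamCoef_zero_mul {α : ℝ} (hα : 0 < α) (β : ℝ) (n : ℕ) :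
    lamCoef α β n = lamCoef α β 0 * (Gamma (n + α) / (Gamma α * n !)) := by
  have := (Gamma_pos_of_pos hα).ne'
  simp only [lamCoef, Nat.cast_zero, zero_add, Nat.factorial_zero, Nat.cast_one, div_one]
  field_simp

lemma lamCoef_zero_sq_le_sq {α : ℝ} (hα : 1 ≤ α) (β : ℝ) (n : ℕ) :
    lamCoef α β 0 ^ 2 ≤ lamCoef α β n ^ 2 := by
  have hΓ : 0 < Gamma α * n ! := mul_pos (Gamma_pos_of_pos (by linarith)) (by positivity)
  have hr : 1 ≤ Gamma (n + α) / (Gamma α * n !) :=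
    (one_le_div hΓ).2 (Real.Gamma_mul_factorial_le_Gamma_nat_add hα n)
  rw [lamCoef_eq_lamCoef_zero_mul (by linarith) β n, mul_pow]
  exact le_mul_of_one_le_right (sq_nonneg _) (one_le_pow₀ hr)

lemma lamCoef_zero_ne_zero {α β : ℝ} (hα : 1 < α ∧ α < 2) (hβ : α - 1 < β ∧ β < 1) :
    lamCoef α β 0 ≠ 0 := by
  have hsinα : sin (π * α) < 0 := by
    rw [show π * α = π * (α - 1) + π by ring, sin_add_pi, neg_neg_iff_pos]
    exact sin_pos_of_pos_of_lt_pi (by nlinarith [pi_pos]) (by nlinarith [pi_pos])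
  have hsinαβ : 0 < sin (π * (α - β)) :=
    sin_pos_of_pos_of_lt_pi (by nlinarith [pi_pos]) (by nlinarith [pi_pos])
  have hsinβ : 0 < sin (π * β) :=
    sin_pos_of_pos_of_lt_pi (by nlinarith [pi_pos]) (by nlinarith [pi_pos])
  have hΓ : 0 < Gamma α := Gamma_pos_of_pos (by linarith)
  simp only [lamCoef, Nat.cast_zero, zero_add, Nat.factorial_zero, Nat.cast_one, div_one]
  exact mul_ne_zero (div_neg_of_neg_of_pos hsinα (by linarith)).ne hΓ.ne'

lemma GNormVal_succ_sq {a b : ℝ} (n : ℕ) (ha : 0 < n + a + 1) (hb : 0 < n + b + 1)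
    (hab : 0 < n + a + b) :
    GNormVal (n + 1) (b - 1) (a - 1) ^ 2 = (n + a + b) / (n + 1) * GNormVal n a b ^ 2 := by
  have hΓab : Gamma (n + a + b + 1) = (n + a + b) * Gamma (n + a + b) :=
    Gamma_add_one hab.ne'
  have hΓn : Gamma (n + 1 + 1) = (n + 1) * Gamma (n + 1) := Gamma_add_one (by positivity)
  have hΓa := Gamma_pos_of_pos ha
  have hΓb := Gamma_pos_of_pos hb
  have hΓab' := Gamma_pos_of_pos hab
  have hΓn' : 0 < Gamma (n + 1) := Gamma_pos_of_pos (by positivity)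
  have h2n : 0 < 2 * (n : ℝ) + a + b + 1 := by linarith
  rw [GNormVal, GNormVal, Nat.cast_succ, hΓab,
    show (n : ℝ) + 1 + (b - 1) + 1 = n + b + 1 by ring,
    show (n : ℝ) + 1 + (a - 1) + 1 = n + a + 1 by ring,
    show (n : ℝ) + 1 + (b - 1) + (a - 1) + 1 = n + a + b by ring,
    show 2 * ((n : ℝ) + 1) + (b - 1) + (a - 1) + 1 = 2 * n + a + b + 1 by ring, hΓn,
    sq_sqrt (div_pos (mul_pos hΓb hΓa) (by positivity)).le,
    sq_sqrt (div_pos (mul_pos hΓa hΓb) (by positivity)).le]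
  field_simp

lemma GNormVal_sq_le_succ {α β : ℝ} (hα : 1 ≤ α) (hβ : α - 1 < β ∧ β < 1) (n : ℕ) :
    GNormVal n (α - β) β ^ 2 ≤ GNormVal (n + 1) (β - 1) (α - β - 1) ^ 2 := by
  have hn : (0 : ℝ) ≤ n := n.cast_nonneg
  have h := GNormVal_succ_sq (a := α - β) (b := β) n (by linarith) (by linarith) (by linarith)
  rw [h, show (n : ℝ) + (α - β) + β = n + α by ring]
  exact le_mul_of_one_le_left (sq_nonneg _) ((one_le_div (by positivity)).2 (by linarith))

theorem stmt9_general (α β : ℝ) (hα : 1 < α ∧ α < 2) (hβ : α - 1 < β ∧ β < 1)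
    (K f : ℝ → ℝ) :
    ∀ M N : ℕ, N < M →
      ∑ i ∈ Finset.Ioc N M, cCoef α β K f i ^ 2 * GNormVal i (α - β) β ^ 2 ≤
        (2 / lamCoef α β 0 ^ 2) *
          ∑ i ∈ Finset.Ioc N M,
            (fCoef α β K f 1 (i + 1) ^ 2 + Aconst α β K f ^ 2 * fCoef α β K f 2 (i + 1) ^ 2) *
              GNormVal (i + 1) (β - 1) (α - β - 1) ^ 2 := by
  intro M N _
  rw [Finset.mul_sum]
  refine Finset.sum_le_sum fun i _ => ?_
  have hc : cCoef α β K f i ^ 2 ≤ 2 / lamCoef α β 0 ^ 2 *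
      (fCoef α β K f 1 (i + 1) ^ 2 + Aconst α β K f ^ 2 * fCoef α β K f 2 (i + 1) ^ 2) := by
    rw [← mul_pow]
    exact neg_add_div_sq_le (lamCoef_zero_ne_zero hα hβ) (lamCoef_zero_sq_le_sq hα.1.le β i)
  rw [← mul_assoc]
  exact mul_le_mul hc (GNormVal_sq_le_succ hα.1.le hβ i) (sq_nonneg _)
    (le_trans (sq_nonneg _) hc)

/-- tail estimate for the spectral coefficients of the solution. -/
theorem stmt9 (α β Km KM : ℝ) (hα : 1 < α ∧ α < 2) (hβ : α - 1 < β ∧ β < 1)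
    (K f : ℝ → ℝ) (hKmeas : Measurable K) (hKm : 0 < Km)
    (hK : ∀ x ∈ Set.Icc (0:ℝ) 1, Km ≤ K x ∧ K x ≤ KM)
    (hf : Measurable f)
    (hfin : IntervalIntegrable (fun x => jw β (α - β) x * f x ^ 2) MeasureTheory.volume 0 1) :
    ∀ M N : ℕ, N < M →
      ∑ i ∈ Finset.Ioc N M, cCoef α β K f i ^ 2 * GNormVal i (α - β) β ^ 2 ≤
        (2 / lamCoef α β 0 ^ 2) *
          ∑ i ∈ Finset.Ioc N M,
            (fCoef α β K f 1 (i + 1) ^ 2 + Aconst α β K f ^ 2 * fCoef α β K f 2 (i + 1) ^ 2) *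
              GNormVal (i + 1) (β - 1) (α - β - 1) ^ 2 :=
  stmt9_general α β hα hβ K f
end
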